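/- arXiv:math/0203262 — 2 statements merged into one kernel-verified Lean document; each statement's English description precedes it below -/
import Mathlib

section
/- With k and g as above (g(x)=k(‖x‖_1) on {0,1}^{m^2}), there is a universal constant c>0 such that for every y ∈ {0,1,...,m}, P[g(x)=y] ≤ c/m under the uniform measure on {0,1}^{m^2}. -/
/-!
The zigzag `k` is the triangle wave `k j = min (j mod 2m) (2m - j mod 2m)`, so `g x = y`
forces `‖x‖₁ ≡ ±y (mod 2m)`, and the level set is bounded by two sums of `C(n, j)`, `n = m²`,
over residue classes modulo `d = 2m`. On the rising half of the unimodal sequence `C(n, ·)`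
each term of such a class is dominated by the `d` terms following it, so `d` times its sum
there is at most `2ⁿ`, up to one term near the middle; the falling half is the mirror image.
Finally `(n + 1) C(n, n/2)² ≤ 4ⁿ` gives `m C(m², m²/2) ≤ 2^(m²)`, so every level set has
probability at most `6 / m`.
-/

open Finset

theorem Nat.choose_monotoneOn (n : ℕ) : MonotoneOn n.choose (Set.Iic (n / 2)) :=
  monotoneOn_of_le_succ Set.ordConnected_Iic fun a _ _ ha => by
    rw [Order.succ_eq_add_one] at ha ⊢
    exact Nat.choose_le_succ_of_lt_half_left ha

theorem Nat.two_mul_add_one_mul_centralBinom_sq_le (k : ℕ) :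
    (2 * k + 1) * k.centralBinom ^ 2 ≤ 16 ^ k := by
  induction k with
  | zero => simp
  | succ k ih =>
    have hrec := Nat.succ_mul_centralBinom_succ k
    refine Nat.le_of_mul_le_mul_left ?_ (by positivity : 0 < (k + 1) ^ 2)
    calc (k + 1) ^ 2 * ((2 * (k + 1) + 1) * (k + 1).centralBinom ^ 2)
        = (2 * k + 3) * ((k + 1) * (k + 1).centralBinom) ^ 2 := by ring
      _ = 4 * ((2 * k + 3) * (2 * k + 1)) * ((2 * k + 1) * k.centralBinom ^ 2) := by
        rw [hrec]; ring
      _ ≤ 4 * (4 * (k + 1) ^ 2) * 16 ^ k :=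
        Nat.mul_le_mul (Nat.mul_le_mul_left _ (by nlinarith)) ih
      _ = (k + 1) ^ 2 * 16 ^ (k + 1) := by ring

theorem Nat.succ_mul_choose_half_sq_le (n : ℕ) : (n + 1) * n.choose (n / 2) ^ 2 ≤ 4 ^ n := by
  obtain ⟨k, rfl | rfl⟩ := Nat.even_or_odd' n
  · have := Nat.two_mul_add_one_mul_centralBinom_sq_le k
    rw [Nat.mul_div_cancel_left k two_pos, ← Nat.centralBinom_eq_two_mul_choose, pow_mul]
    norm_num [this]
  · have hpascal : (k + 1).centralBinom = 2 * (2 * k + 1).choose k := by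
      rw [Nat.centralBinom_eq_two_mul_choose, show 2 * (k + 1) = 2 * k + 1 + 1 by ring,
        Nat.choose_succ_succ, Nat.choose_symm_half]
      ring
    have := Nat.two_mul_add_one_mul_centralBinom_sq_le (k + 1)
    rw [hpascal] at this
    have h16 : (16 : ℕ) ^ (k + 1) = 4 * 4 ^ (2 * k + 1) := by
      rw [pow_succ, pow_succ, pow_mul]; ring
    rw [show (2 * k + 1) / 2 = k by omega]
    nlinarith

def IsSpaced (d : ℕ) (S : Finset ℕ) : Prop :=
  ∀ i ∈ S, ∀ j ∈ S, i < j → i + d ≤ j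

namespace IsSpaced

variable {d : ℕ} {S : Finset ℕ}

theorem mono {T : Finset ℕ} (hS : IsSpaced d S) (hTS : T ⊆ S) : IsSpaced d T :=
  fun i hi j hj => hS i (hTS hi) j (hTS hj)

theorem of_mod_eq {r : ℕ} (hS : ∀ j ∈ S, j % d = r) : IsSpaced d S := by
  intro i hi j hj hij
  have hdvd : d ∣ j - i := (Nat.modEq_iff_dvd' hij.le).mp ((hS i hi).trans (hS j hj).symm)
  have := Nat.le_of_dvd (by omega) hdvd
  omega

theorem image_sub {n : ℕ} (hS : IsSpaced d S) (hSn : ∀ j ∈ S, j ≤ n) :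
    IsSpaced d (S.image (n - ·)) := by
  simp only [IsSpaced, mem_image]
  rintro _ ⟨i, hi, rfl⟩ _ ⟨j, hj, rfl⟩ hij
  have := hS j hj i hi (by omega)
  have := hSn i hi
  omega

theorem card_le_one {a : ℕ} (hS : IsSpaced d S) (hSa : ∀ j ∈ S, a < j + d ∧ j ≤ a) :
    S.card ≤ 1 := by
  refine Finset.card_le_one.mpr fun i hi j hj => ?_
  have := hSa i hi
  have := hSa j hj
  rcases lt_trichotomy i j with h | h | h
  · have := hS i hi j hj h; omega
  · exact h
  · have := hS j hj i hi h; omega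

theorem nsmul_sum_le {M : Type*} [AddCommMonoid M] [PartialOrder M] [IsOrderedAddMonoid M]
    [CanonicallyOrderedAdd M] {p : ℕ} {f : ℕ → M} (hS : IsSpaced d S)
    (hf : MonotoneOn f (Set.Iic p)) (hSp : ∀ j ∈ S, j + d ≤ p) :
    d • ∑ j ∈ S, f j ≤ ∑ i ∈ range (p + 1), f i := by
  have hdisj : (S : Set ℕ).PairwiseDisjoint fun j => Ioc j (j + d) := by
    intro i hi j hj hij
    simp only [Function.onFun, disjoint_left, mem_Ioc]
    rcases lt_or_gt_of_ne hij with h | h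
    · have := hS i hi j hj h; omega
    · have := hS j hj i hi h; omega
  calc d • ∑ j ∈ S, f j = ∑ j ∈ S, ∑ _i ∈ Ioc j (j + d), f j := by
        simp only [smul_sum, sum_const, Nat.card_Ioc, Nat.add_sub_cancel_left]
    _ ≤ ∑ j ∈ S, ∑ i ∈ Ioc j (j + d), f i := by
        refine sum_le_sum fun j hj => sum_le_sum fun i hi => ?_
        have := hSp j hj
        rw [mem_Ioc] at hi
        exact hf (Set.mem_Iic.mpr (by omega)) (Set.mem_Iic.mpr (by omega)) hi.1.le
    _ = ∑ i ∈ S.biUnion fun j => Ioc j (j + d), f i := (sum_biUnion hdisj).symm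
    _ ≤ ∑ i ∈ range (p + 1), f i := by
        refine sum_le_sum_of_subset fun i hi => ?_
        obtain ⟨j, hj, hi⟩ := mem_biUnion.mp hi
        have := hSp j hj
        rw [mem_Ioc] at hi
        rw [mem_range]
        omega

theorem mul_sum_choose_le_of_le_half {n : ℕ} (hS : IsSpaced d S)
    (hSn : ∀ j ∈ S, j ≤ n / 2) :
    d * ∑ j ∈ S, n.choose j ≤ 2 ^ n + d * n.choose (n / 2) := by
  rw [← sum_filter_add_sum_filter_not S (· + d ≤ n / 2), mul_add]
  gcongr
  · calc d * ∑ j ∈ S with j + d ≤ n / 2, n.choose j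
        ≤ ∑ i ∈ range (n / 2 + 1), n.choose i :=
          (hS.mono (filter_subset _ _)).nsmul_sum_le (Nat.choose_monotoneOn n)
            fun j hj => (mem_filter.mp hj).2
      _ ≤ ∑ i ∈ range (n + 1), n.choose i :=
          sum_le_sum_of_subset (range_subset_range.mpr (by omega))
      _ = 2 ^ n := Nat.sum_range_choose n
  · have hcard : (S.filter fun j => ¬ j + d ≤ n / 2).card ≤ 1 :=
      (hS.mono (filter_subset _ _)).card_le_one (a := n / 2) fun j hj => by
        have := hSn j (mem_filter.mp hj).1
        have := (mem_filter.mp hj).2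
        omega
    calc ∑ j ∈ S with ¬ j + d ≤ n / 2, n.choose j
        ≤ (S.filter fun j => ¬ j + d ≤ n / 2).card * n.choose (n / 2) :=
          sum_le_card_nsmul _ _ _ fun j _ => Nat.choose_le_middle j n
      _ ≤ n.choose (n / 2) := by nlinarith

theorem mul_sum_choose_le {n : ℕ} (hS : IsSpaced d S) (hSn : ∀ j ∈ S, j ≤ n) :
    d * ∑ j ∈ S, n.choose j ≤ 2 * 2 ^ n + 2 * (d * n.choose (n / 2)) := by
  set H := S.filter fun j => ¬ j ≤ n / 2
  have hHS : H ⊆ S := filter_subset _ _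
  have hHn : ∀ j ∈ H, j ≤ n := fun j hj => hSn j (hHS hj)
  have hreflect : ∑ j ∈ H, n.choose j = ∑ i ∈ H.image (n - ·), n.choose i := by
    rw [sum_image fun i hi j hj h => by have := hHn i hi; have := hHn j hj; omega]
    exact sum_congr rfl fun j hj => (Nat.choose_symm (hHn j hj)).symm
  have hlow := (hS.mono (filter_subset (· ≤ n / 2) S)).mul_sum_choose_le_of_le_half
    (n := n) fun j hj => (mem_filter.mp hj).2
  have hhigh := ((hS.mono hHS).image_sub hHn).mul_sum_choose_le_of_le_half
    (n := n) fun i hi => by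
      obtain ⟨j, hj, rfl⟩ := mem_image.mp hi
      have := (mem_filter.mp hj).2
      omega
  rw [← sum_filter_add_sum_filter_not S (· ≤ n / 2), mul_add, hreflect]
  omega

end IsSpaced

theorem mul_choose_half_le_two_pow (m : ℕ) : m * (m ^ 2).choose (m ^ 2 / 2) ≤ 2 ^ m ^ 2 := by
  refine (Nat.pow_le_pow_iff_left two_ne_zero).mp ?_
  calc (m * (m ^ 2).choose (m ^ 2 / 2)) ^ 2 = m ^ 2 * (m ^ 2).choose (m ^ 2 / 2) ^ 2 := by ring
    _ ≤ (m ^ 2 + 1) * (m ^ 2).choose (m ^ 2 / 2) ^ 2 := by gcongr; omega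
    _ ≤ 4 ^ m ^ 2 := Nat.succ_mul_choose_half_sq_le _
    _ = (2 ^ m ^ 2) ^ 2 := by rw [← pow_mul, mul_comm, pow_mul]; norm_num

theorem card_filter_card_filter_eq_choose (N j : ℕ) :
    (univ.filter fun x : Fin N → Bool => (univ.filter fun i => x i = true).card = j).card
      = N.choose j := by
  rw [← card_fin N, ← card_powersetCard, card_fin]
  refine card_nbij' (fun x => univ.filter fun i => x i = true) (fun s i => decide (i ∈ s))
    ?_ ?_ ?_ ?_
  · intro x hx; simpa using hx
  · intro s hs; simpa using hs
  · intro x _; funext i; simp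
  · intro s _; ext i; simp

theorem card_filter_card_filter_eq_sum_choose (N : ℕ) (P : ℕ → Prop) [DecidablePred P] :
    (univ.filter fun x : Fin N → Bool => P (univ.filter fun i => x i = true).card).card
      = ∑ j ∈ (range (N + 1)).filter P, N.choose j := by
  rw [card_eq_sum_card_fiberwise
    (f := fun x : Fin N → Bool => (univ.filter fun i => x i = true).card)]
  · refine sum_congr rfl fun j hj => ?_
    rw [← card_filter_card_filter_eq_choose, filter_filter]
    congr 1
    ext x
    simp only [mem_filter, mem_univ, true_and, and_iff_right_iff_imp]
    rintro rfl
    exact (mem_filter.mp hj).2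
  · intro x hx
    simp only [coe_filter, mem_univ, true_and, Set.mem_ofPred_eq, mem_range] at hx ⊢
    exact ⟨Nat.lt_succ_of_le ((card_filter_le _ _).trans_eq (card_fin N)), hx⟩

theorem eq_min_mod_of_zigzag {m : ℕ} (hm : 0 < m) {k : ℕ → ℤ} (hk0 : k 0 = 0)
    (hk : ∀ j : ℕ, k (j + 1) = if j % (2 * m) < m then k j + 1 else k j - 1) (j : ℕ) :
    k j = min ((j % (2 * m) : ℕ) : ℤ) (2 * m - (j % (2 * m) : ℕ)) := by
  induction j with
  | zero => simp [hk0]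
  | succ j ih =>
    have hlt : j % (2 * m) < 2 * m := Nat.mod_lt _ (by omega)
    have hsucc : (j + 1) % (2 * m) = if j % (2 * m) + 1 < 2 * m then j % (2 * m) + 1 else 0 := by
      rw [Nat.add_mod, Nat.one_mod_eq_one.mpr (by omega)]
      split_ifs with h
      · exact Nat.mod_eq_of_lt h
      · rw [show j % (2 * m) + 1 = 2 * m by omega, Nat.mod_self]
    rw [hk j, hsucc, ih]
    generalize j % (2 * m) = r at hlt ⊢
    split_ifs <;> push_cast <;> omega

/-- With `k` as in Lemma (k(0)=0, going up for `j mod 2m < m`, down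
otherwise) and `g x = k ‖x‖₁` on `{0,1}^{m²}`, there is a universal constant `c > 0`
such that every level set of `g` has uniform probability at most `c/m`. -/
theorem stmt2 :
    ∃ c : ℝ, 0 < c ∧ ∀ m : ℕ, 0 < m → ∀ k : ℕ → ℤ,
      k 0 = 0 →
      (∀ j : ℕ, k (j + 1) = if j % (2 * m) < m then k j + 1 else k j - 1) →
      ∀ y : ℤ, 0 ≤ y → y ≤ (m : ℤ) →
        ((Finset.univ.filter fun x : Fin (m ^ 2) → Bool =>
            k ((Finset.univ.filter fun i => x i = true).card) = y).card : ℝ)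
            / 2 ^ (m ^ 2) ≤ c / m := by
  refine ⟨6, by norm_num, fun m hm k hk0 hk y hy0 hym => ?_⟩
  rw [card_filter_card_filter_eq_sum_choose (m ^ 2) (k · = y)]
  set J := (range (m ^ 2 + 1)).filter (k · = y)
  set r := y.toNat
  have hJn : ∀ j ∈ J, j ≤ m ^ 2 := fun j hj =>
    Nat.lt_succ_iff.mp (mem_range.mp (mem_filter.mp hj).1)
  have hres : ∀ j ∈ J.filter (· % (2 * m) ≠ r), j % (2 * m) = 2 * m - r := by
    intro j hj
    obtain ⟨hjJ, hjr⟩ := mem_filter.mp hj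
    have := eq_min_mod_of_zigzag hm hk0 hk j
    have := (mem_filter.mp hjJ).2
    omega
  have hplus := (IsSpaced.of_mod_eq (S := J.filter (· % (2 * m) = r)) fun j hj =>
    (mem_filter.mp hj).2).mul_sum_choose_le fun j hj => hJn j (mem_filter.mp hj).1
  have hminus := (IsSpaced.of_mod_eq hres).mul_sum_choose_le fun j hj =>
    hJn j (mem_filter.mp hj).1
  have hmid := mul_choose_half_le_two_pow m
  have hnat : (∑ j ∈ J, (m ^ 2).choose j) * m ≤ 6 * 2 ^ m ^ 2 := by
    rw [← sum_filter_add_sum_filter_not J (· % (2 * m) = r)]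
    nlinarith
  rw [div_le_div_iff₀ (by positivity) (by positivity)]
  exact_mod_cast hnat
end

section
/- (Talagrand's inequality) There is a universal constant C such that for every finite set J and every f: {0,1}^J → ℝ, Var(f) ≤ C Σ_{j∈J} ‖ρ_j f‖_2^2 / (1 + log(‖ρ_j f‖_2/‖ρ_j f‖_1)), where ρ_j f := (f - f∘σ_j)/2, and terms with ρ_j f ≡ 0 are interpreted as 0. -/
open Finset

/-- Expectation with respect to the uniform measure on `{0,1}^J`. -/
noncomputable def hcExp {J : Type*} [Fintype J] [DecidableEq J] (f : (J → Bool) → ℝ) : ℝ :=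
  (∑ x : J → Bool, f x) / 2 ^ Fintype.card J

/-- The Walsh function `u_S(ω) = (-1)^{Σ_{s∈S} ω_s}`. -/
def walsh {J : Type*} (S : Finset J) (x : J → Bool) : ℝ :=
  (-1 : ℝ) ^ (S.filter fun s => x s = true).card

/-- The Fourier-Walsh coefficient `\hat f(S) = E[f ⬝ u_S]`. -/
noncomputable def fcoef {J : Type*} [Fintype J] [DecidableEq J] (f : (J → Bool) → ℝ) (S : Finset J) : ℝ :=
  hcExp fun x => f x * walsh S x

/-- The discrete derivative `ρ_j f = (f - f∘σ_j)/2`, where `σ_j` flips coordinate `j`. -/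
noncomputable def rhoD {J : Type*} [DecidableEq J] (j : J) (f : (J → Bool) → ℝ) :
    (J → Bool) → ℝ :=
  fun x => (f x - f (Function.update x j (!x j))) / 2

/-- The `L^q` norm with respect to the uniform measure on `{0,1}^J`. -/
noncomputable def lqNorm {J : Type*} [Fintype J] [DecidableEq J] (q : ℝ)
    (f : (J → Bool) → ℝ) : ℝ :=
  (hcExp fun x => |f x| ^ q) ^ (1 / q)

/-- The variance with respect to the uniform measure on `{0,1}^J`. -/
noncomputable def hcVar {J : Type*} [Fintype J] [DecidableEq J]
    (f : (J → Bool) → ℝ) : ℝ :=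
  hcExp fun x => (f x - hcExp f) ^ 2

/-!
Expanding in the Walsh basis, `Var f = ∑_{S ≠ ∅} f̂(S)²`, and `ρ_j f` keeps exactly the
coefficients with `j ∈ S`, so `Var f = ∑_j ∑_S (ρ_j f)^(S)² / |S|`. For `g = ρ_j f` split this
sum at a degree `m`: the tail is at most `‖g‖₂² / (m + 1)`, while Bonami's inequality
`E h⁴ ≤ 9^m (E h²)²` for the degree-`≤ m` part `h` of `g`, combined with Hölder's inequality,
bounds the low-degree weight by `3^m ‖g‖₁ ‖g‖₂`. Taking `m ≈ log (‖g‖₂ / ‖g‖₁) / 4` gives the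
inequality with `C = 7`.
-/

open scoped BigOperators

namespace Finset

lemma expect_sq_le_expect_mul_expect_of_sq_le_mul {ι : Type*} (s : Finset ι) {r f g : ι → ℝ}
    (hf : ∀ i ∈ s, 0 ≤ f i) (hg : ∀ i ∈ s, 0 ≤ g i) (hr : ∀ i ∈ s, r i ^ 2 ≤ f i * g i) :
    (𝔼 i ∈ s, r i) ^ 2 ≤ (𝔼 i ∈ s, f i) * 𝔼 i ∈ s, g i := by
  simp only [expect_eq_sum_div_card, div_pow, div_mul_div_comm, ← sq]
  gcongr
  exact sum_sq_le_sum_mul_sum_of_sq_le_mul s hf hg hr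

lemma expect_abs_mul_pow_four_le {ι : Type*} (s : Finset ι) (f g : ι → ℝ) :
    (𝔼 i ∈ s, |f i| * |g i|) ^ 4
      ≤ (𝔼 i ∈ s, |f i|) ^ 2 * ((𝔼 i ∈ s, f i ^ 2) * 𝔼 i ∈ s, g i ^ 4) := by
  have h₁ : (𝔼 i ∈ s, |f i| * |g i|) ^ 2 ≤ (𝔼 i ∈ s, |f i|) * 𝔼 i ∈ s, |f i| * g i ^ 2 :=
    expect_sq_le_expect_mul_expect_of_sq_le_mul s (fun i _ => abs_nonneg _)
      (fun i _ => by positivity) fun i _ => le_of_eq (by rw [mul_pow, sq_abs (g i)]; ring)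
  have h₂ : (𝔼 i ∈ s, |f i| * g i ^ 2) ^ 2 ≤ (𝔼 i ∈ s, f i ^ 2) * 𝔼 i ∈ s, g i ^ 4 := by
    have h := expect_mul_sq_le_sq_mul_sq s (fun i => |f i|) fun i => g i ^ 2
    simp only [sq_abs, ← pow_mul] at h
    exact h
  calc (𝔼 i ∈ s, |f i| * |g i|) ^ 4 = ((𝔼 i ∈ s, |f i| * |g i|) ^ 2) ^ 2 := by ring
    _ ≤ ((𝔼 i ∈ s, |f i|) * 𝔼 i ∈ s, |f i| * g i ^ 2) ^ 2 := by gcongr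
    _ = (𝔼 i ∈ s, |f i|) ^ 2 * (𝔼 i ∈ s, |f i| * g i ^ 2) ^ 2 := by ring
    _ ≤ _ := by gcongr

end Finset

lemma div_natCast_le_ite_add_div {t : ℝ} (ht : 0 ≤ t) (n m : ℕ) :
    t / n ≤ (if n ≤ m then t else 0) + t / (m + 1) := by
  split_ifs with hn
  · rcases n.eq_zero_or_pos with rfl | hn₀
    · simp only [Nat.cast_zero, div_zero]
      positivity
    · have : t / n ≤ t := div_le_self ht (by exact_mod_cast hn₀)
      linarith [div_nonneg ht (by positivity : (0 : ℝ) ≤ m + 1)]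
  · rw [zero_add]
    gcongr
    exact_mod_cast Nat.lt_of_not_le hn

lemma exists_nat_three_pow_mul_exp_neg_add_inv_le {L : ℝ} (hL : 0 ≤ L) :
    ∃ m : ℕ, 3 ^ m * Real.exp (-L) + 1 / (m + 1) ≤ 7 / (1 + L) := by
  refine ⟨⌊L / 4⌋₊, ?_⟩
  set m := ⌊L / 4⌋₊
  have hm : (m : ℝ) ≤ L / 4 := Nat.floor_le (by positivity)
  have hm' : L / 4 < m + 1 := Nat.lt_floor_add_one _
  have hlow : 3 ^ m * Real.exp (-L) ≤ 2 / (1 + L) := calc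
    3 ^ m * Real.exp (-L) ≤ Real.exp 2 ^ m * Real.exp (-L) := by
      gcongr
      linarith [Real.add_one_le_exp 2]
    _ = Real.exp (-(L / 2)) / Real.exp (L / 2 - 2 * m) := by
      rw [← Real.exp_nat_mul, ← Real.exp_add, ← Real.exp_sub]
      ring_nf
    _ ≤ Real.exp (-(L / 2)) := div_le_self (Real.exp_nonneg _)
      (Real.one_le_exp (by linarith))
    _ ≤ 2 / (1 + L) := by
      rw [Real.exp_neg, ← one_div, div_le_div_iff₀ (Real.exp_pos _) (by linarith)]
      linarith [Real.add_one_le_exp (L / 2)]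
  have hhigh : 1 / ((m : ℝ) + 1) ≤ 5 / (1 + L) := by
    rw [div_le_div_iff₀ (by positivity) (by linarith)]
    linarith [(Nat.cast_nonneg m : (0 : ℝ) ≤ m)]
  linarith [show 2 / (1 + L) + 5 / (1 + L) = 7 / (1 + L) by ring]

section Hypercube

variable {J : Type*}

def flipAt [DecidableEq J] (j : J) (x : J → Bool) : J → Bool :=
  Function.update x j (!x j)

lemma flipAt_involutive [DecidableEq J] (j : J) : Function.Involutive (flipAt j) := by
  intro x
  simp [flipAt]

lemma rhoD_apply [DecidableEq J] (j : J) (f : (J → Bool) → ℝ) (x : J → Bool) :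
    rhoD j f x = (f x - f (flipAt j x)) / 2 :=
  rfl

lemma walsh_eq_prod (S : Finset J) (x : J → Bool) :
    walsh S x = ∏ j ∈ S, if x j then (-1 : ℝ) else 1 := by
  rw [walsh, prod_ite, prod_const, prod_const, one_pow, mul_one]

@[simp]
lemma walsh_empty (x : J → Bool) : walsh ∅ x = 1 := by
  simp [walsh]

lemma walsh_singleton (j : J) (x : J → Bool) : walsh {j} x = if x j then -1 else 1 := by
  simp [walsh_eq_prod]

lemma walsh_singleton_sq (j : J) (x : J → Bool) : walsh {j} x ^ 2 = 1 := by
  rw [walsh_singleton]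
  split_ifs <;> norm_num

lemma walsh_insert [DecidableEq J] {j : J} {S : Finset J} (hj : j ∉ S) (x : J → Bool) :
    walsh (insert j S) x = walsh {j} x * walsh S x := by
  rw [walsh_singleton, walsh_eq_prod, walsh_eq_prod, prod_insert hj]

lemma walsh_flipAt_of_notMem [DecidableEq J] {j : J} {S : Finset J} (hj : j ∉ S)
    (x : J → Bool) : walsh S (flipAt j x) = walsh S x := by
  simp only [walsh_eq_prod]
  refine prod_congr rfl fun i hi => ?_
  rw [flipAt, Function.update_of_ne (ne_of_mem_of_not_mem hi hj)]

lemma walsh_flipAt_of_mem [DecidableEq J] {j : J} {S : Finset J} (hj : j ∈ S)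
    (x : J → Bool) : walsh S (flipAt j x) = -walsh S x := by
  rw [← insert_erase hj, walsh_insert (notMem_erase j S), walsh_insert (notMem_erase j S),
    walsh_flipAt_of_notMem (notMem_erase j S), walsh_singleton, walsh_singleton, flipAt,
    Function.update_self]
  cases x j <;> simp

lemma sum_walsh_mul_walsh [Fintype J] (x y : J → Bool) :
    ∑ S, walsh S x * walsh S y = if x = y then 2 ^ Fintype.card J else 0 := by
  have hfactor : ∀ j, 1 + (if x j then (-1 : ℝ) else 1) * (if y j then -1 else 1)
      = if x j = y j then 2 else 0 := by
    intro j
    cases x j <;> cases y j <;> norm_num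
  simp_rw [walsh_eq_prod, ← prod_mul_distrib]
  rw [← powerset_univ, ← prod_one_add, prod_congr rfl fun j _ => hfactor j]
  split_ifs with hxy
  · simp [hxy]
  · obtain ⟨j, hj⟩ := Function.ne_iff.mp hxy
    exact prod_eq_zero (mem_univ j) (if_neg hj)

variable [Fintype J] [DecidableEq J]

lemma hcExp_eq_expect (f : (J → Bool) → ℝ) : hcExp f = 𝔼 x, f x := by
  rw [hcExp, Fintype.expect_eq_sum_div_card, Fintype.card_fun, Fintype.card_bool]
  push_cast
  rfl

lemma fcoef_eq_expect (f : (J → Bool) → ℝ) (S : Finset J) :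
    fcoef f S = 𝔼 x, f x * walsh S x :=
  hcExp_eq_expect _

lemma lqNorm_one (f : (J → Bool) → ℝ) : lqNorm 1 f = 𝔼 x, |f x| := by
  simp [lqNorm, hcExp_eq_expect]

lemma lqNorm_two_sq (f : (J → Bool) → ℝ) : lqNorm 2 f ^ 2 = 𝔼 x, f x ^ 2 := by
  have hpow : ∀ x, |f x| ^ (2 : ℝ) = f x ^ 2 := fun x => by
    rw [Real.rpow_two, sq_abs]
  rw [lqNorm, hcExp_eq_expect, ← Real.rpow_natCast, ← Real.rpow_mul]
  · simp [hpow]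
  · exact expect_nonneg fun x _ => by positivity

lemma expect_comp_flipAt (j : J) (F : (J → Bool) → ℝ) : 𝔼 x, F (flipAt j x) = 𝔼 x, F x :=
  Fintype.expect_bijective _ (flipAt_involutive j).bijective _ _ fun _ => rfl

lemma expect_eq_zero_of_comp_flipAt {j : J} {F : (J → Bool) → ℝ}
    (hF : ∀ x, F (flipAt j x) = -F x) : 𝔼 x, F x = 0 := by
  have h := expect_comp_flipAt j F
  simp_rw [hF, expect_neg_distrib] at h
  linarith

lemma expect_mul_sum_walsh (g : (J → Bool) → ℝ) (s : Finset (Finset J)) (c : Finset J → ℝ) :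
    𝔼 x, g x * ∑ S ∈ s, c S * walsh S x = ∑ S ∈ s, c S * fcoef g S := by
  simp_rw [fcoef_eq_expect, mul_expect, mul_sum, ← expect_sum_comm]
  congr 1 with x
  exact sum_congr rfl fun S _ => by ring

theorem sum_fcoef_mul_walsh (f : (J → Bool) → ℝ) (x : J → Bool) :
    ∑ S, fcoef f S * walsh S x = f x := by
  have hcard : (Fintype.card (J → Bool) : ℝ) = 2 ^ Fintype.card J := by simp
  simp_rw [fcoef_eq_expect, expect_mul, ← expect_sum_comm, mul_assoc, ← mul_sum,
    sum_walsh_mul_walsh, Fintype.expect_eq_sum_div_card, mul_ite, mul_zero, sum_ite_eq',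
    mem_univ, if_true, hcard]
  field_simp

theorem expect_sq_eq_sum_fcoef_sq (f : (J → Bool) → ℝ) :
    𝔼 x, f x ^ 2 = ∑ S, fcoef f S ^ 2 := by
  have h : ∀ x, f x ^ 2 = f x * ∑ S, fcoef f S * walsh S x := fun x => by
    rw [sum_fcoef_mul_walsh, sq]
  simp_rw [h, expect_mul_sum_walsh, sq]

lemma fcoef_empty (f : (J → Bool) → ℝ) : fcoef f ∅ = 𝔼 x, f x := by
  simp [fcoef_eq_expect]

lemma hcVar_eq_sum_fcoef_sq_sub (f : (J → Bool) → ℝ) :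
    hcVar f = ∑ S, fcoef f S ^ 2 - fcoef f ∅ ^ 2 := by
  have hexpand : ∀ x, (f x - 𝔼 y, f y) ^ 2 = f x ^ 2 - 2 * (𝔼 y, f y) * f x + (𝔼 y, f y) ^ 2 :=
    fun x => by ring
  rw [hcVar, hcExp_eq_expect, hcExp_eq_expect]
  simp_rw [hexpand, expect_add_distrib, expect_sub_distrib, ← mul_expect, Fintype.expect_const,
    expect_sq_eq_sum_fcoef_sq, fcoef_empty]
  ring

lemma fcoef_rhoD (j : J) (f : (J → Bool) → ℝ) (S : Finset J) :
    fcoef (rhoD j f) S = if j ∈ S then fcoef f S else 0 := by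
  have hflip : 𝔼 x, f (flipAt j x) * walsh S x = (if j ∈ S then -1 else 1) * fcoef f S := by
    rw [← expect_comp_flipAt j, fcoef_eq_expect, mul_expect]
    refine expect_congr rfl fun x _ => ?_
    rw [flipAt_involutive j x]
    split_ifs with hj
    · rw [walsh_flipAt_of_mem hj]; ring
    · rw [walsh_flipAt_of_notMem hj]; ring
  simp_rw [fcoef_eq_expect, rhoD_apply, sub_div, sub_mul, expect_sub_distrib, div_mul_eq_mul_div,
    ← expect_div, hflip, fcoef_eq_expect]
  split_ifs <;> ring

theorem hcVar_eq_sum_sum_fcoef_rhoD_sq_div_card (f : (J → Bool) → ℝ) :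
    hcVar f = ∑ j, ∑ S, fcoef (rhoD j f) S ^ 2 / #S := by
  have hS : ∀ S : Finset J, ∑ j, fcoef (rhoD j f) S ^ 2 / #S
      = if S = ∅ then 0 else fcoef f S ^ 2 := by
    intro S
    simp_rw [fcoef_rhoD, ite_pow, zero_pow two_ne_zero, ite_div, zero_div, sum_ite_mem, univ_inter,
      sum_const, nsmul_eq_mul]
    split_ifs with h
    · simp [h]
    · field_simp [card_ne_zero.mpr (nonempty_iff_ne_empty.mpr h)]
  rw [sum_comm, sum_congr rfl fun S _ => hS S, sum_ite, sum_const_zero, zero_add,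
    hcVar_eq_sum_fcoef_sq_sub, filter_ne', sum_erase_eq_sub (mem_univ _)]

lemma expect_walsh_singleton_mul {j : J} {Q : (J → Bool) → ℝ}
    (hQ : ∀ x, Q (flipAt j x) = Q x) : 𝔼 x, walsh {j} x * Q x = 0 :=
  expect_eq_zero_of_comp_flipAt fun x => by
    rw [walsh_flipAt_of_mem (mem_singleton_self j), hQ, neg_mul]

lemma expect_add_walsh_singleton_mul_pow_four {j : J} {P Q : (J → Bool) → ℝ}
    (hP : ∀ x, P (flipAt j x) = P x) (hQ : ∀ x, Q (flipAt j x) = Q x) :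
    𝔼 x, (P x + walsh {j} x * Q x) ^ 4
      = 𝔼 x, P x ^ 4 + 6 * 𝔼 x, P x ^ 2 * Q x ^ 2 + 𝔼 x, Q x ^ 4 := by
  have hexpand : ∀ x, (P x + walsh {j} x * Q x) ^ 4
      = P x ^ 4 + 6 * (P x ^ 2 * Q x ^ 2) + Q x ^ 4
        + walsh {j} x * (4 * P x ^ 3 * Q x + 4 * P x * Q x ^ 3) := fun x => by
    linear_combination (6 * P x ^ 2 * Q x ^ 2 + 4 * P x * Q x ^ 3 * walsh {j} x
      + Q x ^ 4 * (walsh {j} x ^ 2 + 1)) * walsh_singleton_sq j x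
  simp_rw [hexpand, expect_add_distrib, ← mul_expect]
  rw [expect_walsh_singleton_mul fun x => by simp only [hP, hQ], add_zero]

/-- Bonami's inequality. Weighting the coefficients by `3 ^ #S` (this is `E (T_ρ f)⁴ ≤ ‖f‖₂⁴`
with `ρ = 1/√3`) makes the induction over the variables close: splitting off one variable
reduces the step to `a² + 6ab + b² ≤ (a + 3b)²`. -/
theorem expect_sum_walsh_pow_four_le (A : Finset J) (d : Finset J → ℝ) :
    𝔼 x, (∑ S ∈ A.powerset, d S * walsh S x) ^ 4 ≤ (∑ S ∈ A.powerset, 3 ^ #S * d S ^ 2) ^ 2 := by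
  induction A using Finset.induction_on generalizing d with
  | empty => simp [← pow_mul]
  | @insert j A hj ih =>
    have hnotMem : ∀ S ∈ A.powerset, j ∉ S := fun S hS => notMem_mono (mem_powerset.1 hS) hj
    set P : (J → Bool) → ℝ := fun x => ∑ S ∈ A.powerset, d S * walsh S x
    set Q : (J → Bool) → ℝ := fun x => ∑ S ∈ A.powerset, d (insert j S) * walsh S x
    have hsplit : ∀ x, ∑ S ∈ (insert j A).powerset, d S * walsh S x = P x + walsh {j} x * Q x := by
      intro x
      rw [sum_powerset_insert hj, mul_sum]
      congr 1
      exact sum_congr rfl fun S hS => by rw [walsh_insert (hnotMem S hS)]; ring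
    have hinvariant : ∀ (c : Finset J → ℝ) x, ∑ S ∈ A.powerset, c S * walsh S (flipAt j x)
        = ∑ S ∈ A.powerset, c S * walsh S x := fun c x =>
      sum_congr rfl fun S hS => by rw [walsh_flipAt_of_notMem (hnotMem S hS)]
    set a := ∑ S ∈ A.powerset, 3 ^ #S * d S ^ 2
    set b := ∑ S ∈ A.powerset, 3 ^ #S * d (insert j S) ^ 2
    have hweight : ∑ S ∈ (insert j A).powerset, 3 ^ #S * d S ^ 2 = a + 3 * b := by
      rw [sum_powerset_insert hj, mul_sum]
      congr 1
      exact sum_congr rfl fun S hS => by rw [card_insert_of_notMem (hnotMem S hS)]; ring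
    have hP : 𝔼 x, P x ^ 4 ≤ a ^ 2 := ih d
    have hQ : 𝔼 x, Q x ^ 4 ≤ b ^ 2 := ih fun S => d (insert j S)
    have hcross : (𝔼 x, P x ^ 2 * Q x ^ 2) ^ 2 ≤ (a * b) ^ 2 :=
      calc (𝔼 x, P x ^ 2 * Q x ^ 2) ^ 2
          ≤ (𝔼 x, (P x ^ 2) ^ 2) * 𝔼 x, (Q x ^ 2) ^ 2 := expect_mul_sq_le_sq_mul_sq _ _ _
        _ ≤ a ^ 2 * b ^ 2 := by
          simp_rw [← pow_mul, Nat.reduceMul]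
          exact mul_le_mul hP hQ (expect_nonneg fun x _ => by positivity) (sq_nonneg a)
        _ = (a * b) ^ 2 := by ring
    have ha : 0 ≤ a := sum_nonneg fun S _ => by positivity
    have hb : 0 ≤ b := sum_nonneg fun S _ => by positivity
    have hcross_le : 𝔼 x, P x ^ 2 * Q x ^ 2 ≤ a * b :=
      abs_le_of_sq_le_sq' hcross (mul_nonneg ha hb) |>.2
    rw [hweight, expect_congr rfl fun x _ => by rw [hsplit x],
      expect_add_walsh_singleton_mul_pow_four (hinvariant d) (hinvariant _)]
    nlinarith

lemma lqNorm_nonneg (q : ℝ) (f : (J → Bool) → ℝ) : 0 ≤ lqNorm q f :=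
  Real.rpow_nonneg (by rw [hcExp_eq_expect]; exact expect_nonneg fun _ _ => by positivity) _

lemma lqNorm_one_pos {f : (J → Bool) → ℝ} (hf : f ≠ 0) : 0 < lqNorm 1 f := by
  obtain ⟨x, hx⟩ := Function.ne_iff.mp hf
  rw [lqNorm_one, Fintype.expect_eq_sum_div_card]
  exact div_pos (sum_pos' (fun y _ => abs_nonneg _) ⟨x, mem_univ x, abs_pos.mpr hx⟩)
    (by positivity)

lemma lqNorm_one_le_lqNorm_two (f : (J → Bool) → ℝ) : lqNorm 1 f ≤ lqNorm 2 f := by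
  have hsq : lqNorm 1 f ^ 2 ≤ lqNorm 2 f ^ 2 := by
    have h := expect_mul_sq_le_sq_mul_sq univ (fun x => |f x|) fun _ => (1 : ℝ)
    simpa [lqNorm_one, lqNorm_two_sq] using h
  exact abs_le_of_sq_le_sq' hsq (lqNorm_nonneg 2 f) |>.2

theorem sum_fcoef_sq_le_three_pow_mul_lqNorm (g : (J → Bool) → ℝ) (m : ℕ) :
    ∑ S with #S ≤ m, fcoef g S ^ 2 ≤ 3 ^ m * (lqNorm 1 g * lqNorm 2 g) := by
  set W := ∑ S with #S ≤ m, fcoef g S ^ 2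
  set h : (J → Bool) → ℝ := fun x => ∑ S with #S ≤ m, fcoef g S * walsh S x
  set K := 3 ^ m * (lqNorm 1 g * lqNorm 2 g)
  have hW : 0 ≤ W := sum_nonneg fun S _ => sq_nonneg _
  have hK : 0 ≤ K := by positivity [lqNorm_nonneg 1 g, lqNorm_nonneg 2 g]
  have hgh : W ≤ 𝔼 x, |g x| * |h x| := calc
    W = 𝔼 x, g x * h x := by
      rw [expect_mul_sum_walsh]
      exact sum_congr rfl fun S _ => sq _
    _ ≤ 𝔼 x, |g x| * |h x| := expect_le_expect fun x _ => by rw [← abs_mul]; exact le_abs_self _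
  have hh : 𝔼 x, h x ^ 4 ≤ (3 ^ m * W) ^ 2 := calc
    𝔼 x, h x ^ 4 ≤ (∑ S with #S ≤ m, 3 ^ #S * fcoef g S ^ 2) ^ 2 := by
      have hbonami := expect_sum_walsh_pow_four_le univ fun S => if #S ≤ m then fcoef g S else 0
      simp only [powerset_univ, ite_mul, zero_mul, ite_pow, zero_pow two_ne_zero, mul_ite,
        mul_zero, ← sum_filter] at hbonami
      exact hbonami
    _ ≤ (3 ^ m * W) ^ 2 := by
      rw [mul_sum]
      exact pow_le_pow_left₀ (sum_nonneg fun S _ => by positivity) (sum_le_sum fun S hS =>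
        mul_le_mul_of_nonneg_right (pow_le_pow_right₀ (by norm_num) (mem_filter.mp hS).2)
          (sq_nonneg _)) 2
  have hbound : W ^ 2 * W ^ 2 ≤ K ^ 2 * W ^ 2 := calc
    W ^ 2 * W ^ 2 ≤ (𝔼 x, |g x| * |h x|) ^ 4 := by rw [← pow_add]; gcongr
    _ ≤ (𝔼 x, |g x|) ^ 2 * ((𝔼 x, g x ^ 2) * 𝔼 x, h x ^ 4) := expect_abs_mul_pow_four_le _ _ _
    _ ≤ lqNorm 1 g ^ 2 * (lqNorm 2 g ^ 2 * (3 ^ m * W) ^ 2) := by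
      rw [lqNorm_one, lqNorm_two_sq]
      gcongr
    _ = K ^ 2 * W ^ 2 := by ring
  have hsq : W ^ 2 ≤ K ^ 2 := by
    rcases hW.eq_or_lt with hzero | hpos
    · rw [← hzero, zero_pow two_ne_zero]
      exact sq_nonneg K
    · exact le_of_mul_le_mul_right hbound (by positivity)
  exact abs_le_of_sq_le_sq' hsq hK |>.2

/-- The `S = ∅` term vanishes because `x / 0 = 0`. -/
theorem sum_fcoef_sq_div_card_le {g : (J → Bool) → ℝ} (hg : g ≠ 0) :
    ∑ S, fcoef g S ^ 2 / #S
      ≤ 7 * (lqNorm 2 g ^ 2 / (1 + Real.log (lqNorm 2 g / lqNorm 1 g))) := by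
  set a := lqNorm 1 g
  set b := lqNorm 2 g
  have ha : 0 < a := lqNorm_one_pos hg
  have hab : a ≤ b := lqNorm_one_le_lqNorm_two g
  set L := Real.log (b / a)
  have hL : 0 ≤ L := Real.log_nonneg ((one_le_div ha).mpr hab)
  have hexp : Real.exp (-L) = a / b := by
    rw [Real.exp_neg, Real.exp_log (div_pos (ha.trans_le hab) ha), inv_div]
  obtain ⟨m, hm⟩ := exists_nat_three_pow_mul_exp_neg_add_inv_le hL
  calc ∑ S, fcoef g S ^ 2 / #S
      ≤ ∑ S, ((if #S ≤ m then fcoef g S ^ 2 else 0) + fcoef g S ^ 2 / (m + 1)) :=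
        sum_le_sum fun S _ => div_natCast_le_ite_add_div (sq_nonneg _) _ _
    _ = ∑ S with #S ≤ m, fcoef g S ^ 2 + b ^ 2 / (m + 1) := by
        rw [sum_add_distrib, ← sum_filter, ← sum_div, ← expect_sq_eq_sum_fcoef_sq, lqNorm_two_sq]
    _ ≤ 3 ^ m * (a * b) + b ^ 2 / (m + 1) := by
        gcongr
        exact sum_fcoef_sq_le_three_pow_mul_lqNorm g m
    _ = b ^ 2 * (3 ^ m * Real.exp (-L) + 1 / (m + 1)) := by
        rw [hexp]
        field_simp [(ha.trans_le hab).ne']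
    _ ≤ b ^ 2 * (7 / (1 + L)) := by gcongr
    _ = 7 * (b ^ 2 / (1 + L)) := by ring

end Hypercube

open scoped Classical in
/-- Talagrand's inequality: there is a universal constant `C` such that
for every finite `J` and every `f : {0,1}^J → ℝ`,
`Var(f) ≤ C Σ_j ‖ρ_j f‖₂² / (1 + log(‖ρ_j f‖₂/‖ρ_j f‖₁))`,
terms with `ρ_j f ≡ 0` being interpreted as `0`. -/
theorem stmt8 :
    ∃ C : ℝ, 0 < C ∧
      ∀ (J : Type) [Fintype J] [DecidableEq J] (f : (J → Bool) → ℝ),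
        hcVar f ≤ C * ∑ j : J,
          if rhoD j f = 0 then 0
          else lqNorm 2 (rhoD j f) ^ 2 /
            (1 + Real.log (lqNorm 2 (rhoD j f) / lqNorm 1 (rhoD j f))) := by
  refine ⟨7, by norm_num, fun J _ _ f => ?_⟩
  rw [hcVar_eq_sum_sum_fcoef_rhoD_sq_div_card, mul_sum]
  gcongr with j
  split_ifs with h
  · simp [h, fcoef_eq_expect]
  · exact sum_fcoef_sq_div_card_le h
end
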